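/- arXiv:1001.2366 — 3 statements merged into one kernel-verified Lean document; each statement's English description precedes it below -/
import Mathlib

section
/- Let E → B be a functor of categories that lifts isomorphisms and is full and faithful on hom-sets (a trivial isofibration). Then for every commutative square from a functor J : X → Y that is injective on objects and faithful into E → B, a diagonal filler exists. (That is, functors injective on objects and faithful have the left lifting property with respect to surjective-on-objects equivalences.) -/
/-!
On objects the lift is forced on the image of `J` and may be any `P`-preimage elsewhere; this is
possible since `J.obj` is injective and `P.obj` surjective. Since `P` is fully faithful, the
action on morphisms is then uniquely determined by `v`, which also makes the upper triangle
commute.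
-/

open CategoryTheory

theorem Function.exists_lift_of_injective_of_surjective {α β γ δ : Type*}
    {j : α → β} (hj : Function.Injective j) {p : γ → δ} (hp : Function.Surjective p)
    {u : α → γ} {v : β → δ} (hsq : p ∘ u = v ∘ j) :
    ∃ w : β → γ, w ∘ j = u ∧ p ∘ w = v := by
  refine ⟨Function.extend j u (Function.surjInv hp ∘ v), Function.extend_comp hj _ _, ?_⟩
  funext b
  by_cases hb : ∃ a, j a = b
  · obtain ⟨a, rfl⟩ := hb
    simpa [hj.extend_apply] using congrFun hsq a
  · simp [Function.extend_apply' _ _ _ hb, Function.surjInv_eq hp]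

namespace CategoryTheory.Functor

variable {Y E B : Type*} [Category Y] [Category E] [Category B]

theorem eq_of_comp_eq_of_obj_eq {X : Type*} [Category X] (P : E ⥤ B) [P.Faithful]
    {F G : X ⥤ E} (hobj : ∀ x, F.obj x = G.obj x) (h : F ⋙ P = G ⋙ P) : F = G := by
  refine Functor.ext hobj fun x x' f => P.map_injective ?_
  simpa [eqToHom_map] using Functor.congr_hom h f

noncomputable def liftOfObj (P : E ⥤ B) [P.Full] [P.Faithful] (v : Y ⥤ B) (w₀ : Y → E)
    (hw₀ : ∀ y, P.obj (w₀ y) = v.obj y) : Y ⥤ E where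
  obj := w₀
  map {y y'} f := P.preimage (eqToHom (hw₀ y) ≫ v.map f ≫ eqToHom (hw₀ y').symm)
  map_id y := P.map_injective (by simp)
  map_comp f g := P.map_injective (by simp)

@[simp]
theorem liftOfObj_obj (P : E ⥤ B) [P.Full] [P.Faithful] (v : Y ⥤ B) (w₀ : Y → E)
    (hw₀ : ∀ y, P.obj (w₀ y) = v.obj y) (y : Y) : (liftOfObj P v w₀ hw₀).obj y = w₀ y :=
  rfl

theorem liftOfObj_comp (P : E ⥤ B) [P.Full] [P.Faithful] (v : Y ⥤ B) (w₀ : Y → E)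
    (hw₀ : ∀ y, P.obj (w₀ y) = v.obj y) : liftOfObj P v w₀ hw₀ ⋙ P = v :=
  Functor.ext hw₀ fun y y' f => by simp [liftOfObj]

end CategoryTheory.Functor

open Functor in
theorem lift_against_surjective_equivalence_general
    {X : Type u₁} [Category.{v₁} X] {Y : Type u₂} [Category.{v₂} Y]
    {E : Type u₃} [Category.{v₃} E] {B : Type u₄} [Category.{v₄} B]
    (J : X ⥤ Y) (hJobj : Function.Injective J.obj)
    (P : E ⥤ B) (hPobj : Function.Surjective P.obj) [P.Full] [P.Faithful]
    (u : X ⥤ E) (v : Y ⥤ B) (hsq : u ⋙ P = J ⋙ v) :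
    ∃ w : Y ⥤ E, J ⋙ w = u ∧ w ⋙ P = v := by
  obtain ⟨w₀, hw₀J, hw₀P⟩ := Function.exists_lift_of_injective_of_surjective hJobj hPobj
    (u := u.obj) (v := v.obj) (funext fun x => Functor.congr_obj hsq x)
  let w := liftOfObj P v w₀ (congrFun hw₀P)
  have hwP : w ⋙ P = v := liftOfObj_comp P v w₀ _
  refine ⟨w, eq_of_comp_eq_of_obj_eq P (congrFun hw₀J) ?_, hwP⟩
  rw [Functor.assoc, hwP, hsq]

theorem lift_against_surjective_equivalence
    {X : Type u₁} [Category.{v₁} X] {Y : Type u₂} [Category.{v₂} Y]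
    {E : Type u₃} [Category.{v₃} E] {B : Type u₄} [Category.{v₄} B]
    (J : X ⥤ Y) (hJobj : Function.Injective J.obj) [J.Faithful]
    (P : E ⥤ B) (hPobj : Function.Surjective P.obj) [P.Full] [P.Faithful]
    (u : X ⥤ E) (v : Y ⥤ B) (hsq : u ⋙ P = J ⋙ v) :
    ∃ w : Y ⥤ E, J ⋙ w = u ∧ w ⋙ P = v :=
  lift_against_surjective_equivalence_general J hJobj P hPobj u v hsq
end

section
/- Path object argument: Let C be a category with finite products, equipped with classes of weak equivalences (satisfying 2-out-of-3 and retract closure), fibrations, and trivial cofibrations defined by left lifting against fibrations. Assume every object is fibrant (the map to the terminal object is a fibration) and every object B admits a factorization of the diagonal B → B × B as a weak equivalence D : B → PB followed by a fibration PB → B × B. Then every trivial cofibration is a weak equivalence. -/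
/-!
Fibrancy of `A` turns a trivial cofibration `F : A ⟶ B` into a split mono, `F ≫ G = 𝟙 A`.
Lifting `F` against the path fibration `p : PB ⟶ B ⨯ B` gives a right homotopy `H : B ⟶ PB`
from `𝟙 B` to `G ≫ F`. Both projections `PB ⟶ B` are retractions of the weak equivalence
`D : B ⟶ PB`, hence weak equivalences, so `H` and then `G ≫ F` are weak equivalences by
2-out-of-3; finally `F` is a retract of `G ≫ F`.
-/

open CategoryTheory CategoryTheory.Limits

namespace CategoryTheory

variable {C : Type*} [Category C]

def RetractArrow.ofCompEqId {A B : C} {F : A ⟶ B} {G : B ⟶ A} (hFG : F ≫ G = 𝟙 A) :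
    RetractArrow F (G ≫ F) where
  i := Arrow.homMk F (𝟙 B) (by simp [reassoc_of% hFG])
  r := Arrow.homMk G (𝟙 B) (by simp)
  retract := by ext <;> simp [hFG]

lemma exists_comp_eq_id_of_hasLiftingProperty_terminal_from [HasTerminal C] {A B : C}
    (F : A ⟶ B) [HasLiftingProperty F (terminal.from A)] : ∃ G : B ⟶ A, F ≫ G = 𝟙 A :=
  let sq : CommSq (𝟙 A) F (terminal.from A) (terminal.from B) := ⟨Subsingleton.elim _ _⟩
  ⟨sq.lift, sq.fac_left⟩

namespace MorphismProperty

variable (W : MorphismProperty C)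

lemma of_precomp_of_comp_eq_id [W.HasOfPrecompProperty W] [W.ContainsIdentities] {X Y : C}
    {f : X ⟶ Y} {g : Y ⟶ X} (hf : W f) (h : f ≫ g = 𝟙 X) : W g :=
  W.of_precomp f g hf (h ▸ W.id_mem X)

lemma of_postcomp_of_comp_eq_id [W.HasOfPostcompProperty W] [W.ContainsIdentities] {X Y : C}
    {f : X ⟶ Y} {g : Y ⟶ X} (hg : W g) (h : f ≫ g = 𝟙 X) : W f :=
  W.of_postcomp f g hg (h ▸ W.id_mem X)

lemma of_comp_eq_id_of_hasLiftingProperty_pathObject [W.HasTwoOutOfThreeProperty]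
    [W.ContainsIdentities] [W.IsStableUnderRetracts] {A B PB : C} [HasBinaryProduct B B]
    {F : A ⟶ B} {G : B ⟶ A} (hFG : F ≫ G = 𝟙 A) {D : B ⟶ PB} {p : PB ⟶ B ⨯ B} (hD : W D)
    (hDp : D ≫ p = prod.lift (𝟙 B) (𝟙 B)) [HasLiftingProperty F p] : W F := by
  have sq : CommSq (F ≫ D) F p (prod.lift (𝟙 B) (G ≫ F)) :=
    ⟨by ext <;> simp [hDp, reassoc_of% hFG]⟩
  obtain ⟨H, hHp⟩ : ∃ H, H ≫ p = prod.lift (𝟙 B) (G ≫ F) := ⟨sq.lift, sq.fac_right⟩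
  have hp₀ : W (p ≫ prod.fst) :=
    W.of_precomp_of_comp_eq_id hD (by rw [reassoc_of% hDp, prod.lift_fst])
  have hp₁ : W (p ≫ prod.snd) :=
    W.of_precomp_of_comp_eq_id hD (by rw [reassoc_of% hDp, prod.lift_snd])
  have hH : W H :=
    W.of_postcomp_of_comp_eq_id hp₀ (by rw [reassoc_of% hHp, prod.lift_fst])
  have hGF : W (G ≫ F) := by
    simpa only [reassoc_of% hHp, prod.lift_snd] using W.comp_mem _ _ hH hp₁
  exact W.of_retract (RetractArrow.ofCompEqId hFG) hGF

end MorphismProperty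

end CategoryTheory

theorem trivial_cofibrations_are_weak_equivalences
    {C : Type u} [Category.{v} C] [HasBinaryProducts C] [HasTerminal C]
    (W Fib : MorphismProperty C)
    (hW_id : ∀ X : C, W (𝟙 X))
    (hW_comp : ∀ {X Y Z : C} (f : X ⟶ Y) (g : Y ⟶ Z), W f → W g → W (f ≫ g))
    (hW_cancel_left : ∀ {X Y Z : C} (f : X ⟶ Y) (g : Y ⟶ Z), W f → W (f ≫ g) → W g)
    (hW_cancel_right : ∀ {X Y Z : C} (f : X ⟶ Y) (g : Y ⟶ Z), W g → W (f ≫ g) → W f)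
    (hW_retract : ∀ {X Y X' Y' : C} (f : X ⟶ Y) (g : X' ⟶ Y')
      (i : Arrow.mk f ⟶ Arrow.mk g) (r : Arrow.mk g ⟶ Arrow.mk f),
      i ≫ r = 𝟙 (Arrow.mk f) → W g → W f)
    -- every object is fibrant
    (hfibrant : ∀ X : C, Fib (terminal.from X))
    -- path objects
    (hpath : ∀ B : C, ∃ (PB : C) (D : B ⟶ PB) (p : PB ⟶ B ⨯ B),
      W D ∧ Fib p ∧ D ≫ p = prod.lift (𝟙 B) (𝟙 B)) :
    ∀ {A B : C} (F : A ⟶ B),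
      (∀ {U V : C} (q : U ⟶ V), Fib q → HasLiftingProperty F q) → W F := by
  intro A B F hF
  have : W.HasTwoOutOfThreeProperty :=
    { comp_mem := hW_comp, of_postcomp := hW_cancel_right, of_precomp := hW_cancel_left }
  have : W.ContainsIdentities := ⟨hW_id⟩
  have : W.IsStableUnderRetracts := ⟨fun h hg ↦ hW_retract _ _ h.i h.r h.retract hg⟩
  have := hF _ (hfibrant A)
  obtain ⟨G, hFG⟩ := exists_comp_eq_id_of_hasLiftingProperty_terminal_from F
  obtain ⟨PB, D, p, hD, hp, hDp⟩ := hpath B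
  have := hF p hp
  exact W.of_comp_eq_id_of_hasLiftingProperty_pathObject hFG hD hDp
end

section
/- A retract of a free category (a category free on a directed graph) is free: if A is a category, F a free category on a graph, and there are functors I : A → F and R : F → A with R ∘ I = 1_A, then A is free on some graph. -/
/-!
Grade the morphisms of `A` by the length of their images under `I`. Only identities have length
zero, so by induction on length every morphism is a composite of indecomposable ones. The
decomposition is unique: if `u ≫ a = v ≫ b` with `a`, `b` indecomposable and `I a` no longer
than `I b`, then `I b = w ≫ I a` in the free category, and applying `R` factors `b` through `a`;
indecomposability of `b` makes the factor an identity, whence `a = b` and, `I` being faithful,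
`u = v`. So `A` is free on the graph of its indecomposable morphisms.
-/

open CategoryTheory

universe v u

namespace Quiver.Path

variable {V : Type*} [Quiver V]

theorem exists_eq_comp_of_comp_eq_comp {b c : V} (s : Path b c) :
    ∀ {a b' : V} {p : Path a b} {q : Path a b'} {t : Path b' c},
      p.comp s = q.comp t → s.length ≤ t.length →
      ∃ w : Path b' b, t = w.comp s ∧ p = q.comp w := by
  induction s with
  | nil => exact fun hpq _ => ⟨_, rfl, by simpa using hpq⟩
  | cons s e ih =>
    intro a b' p q t hpq hl
    cases t with
    | nil => simp at hl
    | cons t f =>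
      obtain ⟨rfl, hps, hef⟩ := Path.cons.inj hpq
      obtain rfl := eq_of_heq hef
      obtain ⟨w, rfl, rfl⟩ := ih (eq_of_heq hps) (by simpa using hl)
      exact ⟨w, rfl, rfl⟩

end Quiver.Path

theorem CategoryTheory.Paths.exists_eq_eqToHom_of_length_eq_zero {V : Type*} [Quiver V]
    {a b : Paths V} (p : a ⟶ b) (hp : p.length = 0) : ∃ e : a = b, p = eqToHom e := by
  obtain rfl := Quiver.Path.eq_of_length_zero p hp
  exact ⟨rfl, Quiver.Path.eq_nil_of_length_zero p hp⟩

structure LengthFunction (A : Type u) [Category.{v} A] where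
  len : ∀ {X Y : A}, (X ⟶ Y) → ℕ
  len_comp : ∀ {X Y Z : A} (f : X ⟶ Y) (g : Y ⟶ Z), len (f ≫ g) = len f + len g
  exists_eq_eqToHom : ∀ {X Y : A} (f : X ⟶ Y), len f = 0 → ∃ e : X = Y, f = eqToHom e

namespace LengthFunction

variable {A : Type u} [Category.{v} A] (ℓ : LengthFunction A)

theorem len_id (X : A) : ℓ.len (𝟙 X) = 0 := by
  have := ℓ.len_comp (𝟙 X) (𝟙 X)
  rw [Category.id_comp] at this
  omega

def Indecomposable {X Y : A} (f : X ⟶ Y) : Prop :=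
  ℓ.len f ≠ 0 ∧
    ∀ ⦃Z : A⦄ (g : X ⟶ Z) (k : Z ⟶ Y), f = g ≫ k → ℓ.len g = 0 ∨ ℓ.len k = 0

/-- Holds in a free category: a path determines its last edge and the path before it. -/
def UniqueLastAtom : Prop :=
  ∀ ⦃X Y Z Z' : A⦄ ⦃a : Z ⟶ Y⦄ ⦃b : Z' ⟶ Y⦄ ⦃u : X ⟶ Z⦄ ⦃v : X ⟶ Z'⦄,
    ℓ.Indecomposable a → ℓ.Indecomposable b → u ≫ a = v ≫ b →
      ∃ e : Z' = Z, b = eqToHom e ≫ a ∧ u = v ≫ eqToHom e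

def Atoms (_ : LengthFunction A) : Type u := A

instance : Quiver.{v} ℓ.Atoms where
  Hom (X Y : A) := { f : X ⟶ Y // ℓ.Indecomposable f }

def composite : Paths ℓ.Atoms ⥤ A :=
  Paths.lift { obj := fun X => (X : A), map := fun f => f.1 }

theorem len_composite_map_cons_ne_zero {X Y Z : ℓ.Atoms} (p : Quiver.Path X Y) (a : Y ⟶ Z) :
    ℓ.len (ℓ.composite.map (p.cons a)) ≠ 0 := fun h =>
  a.2.1 (Nat.eq_zero_of_add_eq_zero ((ℓ.len_comp (ℓ.composite.map p) a.1).symm.trans h)).2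

theorem composite_map_injective (hℓ : ℓ.UniqueLastAtom) {X Y : ℓ.Atoms} :
    ∀ p q : Quiver.Path X Y, ℓ.composite.map p = ℓ.composite.map q → p = q
  | .nil, .nil, _ => rfl
  | .nil, .cons q b, h =>
    absurd ((ℓ.len_id X).symm.trans (congrArg ℓ.len h)).symm
      (ℓ.len_composite_map_cons_ne_zero q b)
  | .cons p a, .nil, h =>
    absurd ((congrArg ℓ.len h).trans (ℓ.len_id X)) (ℓ.len_composite_map_cons_ne_zero p a)
  | .cons p a, .cons q b, h => by
    change ℓ.composite.map p ≫ a.1 = ℓ.composite.map q ≫ b.1 at h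
    obtain ⟨rfl, hab, hpq⟩ := hℓ a.2 b.2 h
    erw [eqToHom_refl, Category.id_comp] at hab
    erw [eqToHom_refl, Category.comp_id] at hpq
    rw [Subtype.ext hab, composite_map_injective hℓ p q hpq]

theorem exists_composite_map_eq {X Y : A} (f : X ⟶ Y) :
    ∃ p : Quiver.Path (V := ℓ.Atoms) X Y, ℓ.composite.map p = f := by
  induction hn : ℓ.len f using Nat.strong_induction_on generalizing X Y f with
  | _ n ih =>
    by_cases hf0 : ℓ.len f = 0
    · obtain ⟨rfl, rfl⟩ := ℓ.exists_eq_eqToHom f hf0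
      exact ⟨.nil, rfl⟩
    by_cases hf : ℓ.Indecomposable f
    · exact ⟨Quiver.Hom.toPath (V := ℓ.Atoms) ⟨f, hf⟩, Category.id_comp f⟩
    obtain ⟨Z, g, k, rfl, hg, hk⟩ : ∃ (Z : A) (g : X ⟶ Z) (k : Z ⟶ Y),
        f = g ≫ k ∧ ℓ.len g ≠ 0 ∧ ℓ.len k ≠ 0 := by
      simpa [Indecomposable, hf0] using hf
    rw [ℓ.len_comp] at hn
    obtain ⟨p, rfl⟩ := ih _ (by omega) g rfl
    obtain ⟨q, rfl⟩ := ih _ (by omega) k rfl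
    exact ⟨p.comp q, ℓ.composite.map_comp (X := X) p q⟩

theorem isIso_composite (hℓ : ℓ.UniqueLastAtom) : ℓ.composite.IsIso where
  faithful := ⟨fun {_ _} p q => ℓ.composite_map_injective hℓ p q⟩
  full := ⟨fun f => ℓ.exists_composite_map_eq f⟩
  bijective_obj := Function.bijective_id

variable {G : Type*} [Quiver G] {I : A ⥤ Paths G} {R : Paths G ⥤ A}

def ofRetract (h : I ⋙ R = 𝟭 A) : LengthFunction A where
  len f := (I.map f).length
  len_comp f g := by rw [I.map_comp]; exact Quiver.Path.length_comp _ _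
  exists_eq_eqToHom {X Y} f hf := by
    obtain ⟨e, he⟩ := Paths.exists_eq_eqToHom_of_length_eq_zero (I.map f) hf
    obtain rfl : X = Y :=
      (Functor.congr_obj h X).symm.trans ((congrArg R.obj e).trans (Functor.congr_obj h Y))
    exact ⟨rfl, (Functor.Faithful.of_comp_eq h).map_injective (he.trans (I.map_id X).symm)⟩

theorem ofRetract_exists_eq_of_comp_eq (h : I ⋙ R = 𝟭 A) {X Y Z Z' : A} {a : Z ⟶ Y}
    {b : Z' ⟶ Y} {u : X ⟶ Z} {v : X ⟶ Z'} (ha : (ofRetract h).Indecomposable a)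
    (hb : (ofRetract h).Indecomposable b) (huv : u ≫ a = v ≫ b)
    (hab : (ofRetract h).len a ≤ (ofRetract h).len b) :
    ∃ e : Z' = Z, b = eqToHom e ≫ a ∧ u = v ≫ eqToHom e := by
  have hI : (I.map u).comp (I.map a) = (I.map v).comp (I.map b) :=
    (I.map_comp u a).symm.trans ((congrArg I.map huv).trans (I.map_comp v b))
  obtain ⟨w, hwb, hwu⟩ := Quiver.Path.exists_eq_comp_of_comp_eq_comp _ hI hab
  -- applying `R` to `I b = w ≫ I a` factors `b` through `a`
  have hba : b = (eqToHom (Functor.congr_obj h Z').symm ≫ R.map w ≫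
      eqToHom (Functor.congr_obj h Z)) ≫ a := by
    have hwb' : I.map b = w ≫ I.map a := hwb
    calc b = eqToHom (Functor.congr_obj h Z').symm ≫ R.map (I.map b) ≫
          eqToHom (Functor.congr_obj h Y) := by
          simp [← Functor.comp_map, Functor.congr_hom h b]
      _ = _ := by simp [hwb', ← Functor.comp_map, Functor.congr_hom h a]
  obtain ⟨rfl, hc⟩ := (ofRetract h).exists_eq_eqToHom _
    ((hb.2 _ a hba).resolve_right ha.1)
  obtain rfl : b = a := by simpa [hc] using hba
  have hw : w.length = 0 := by
    have := (congrArg Quiver.Path.length hwb).trans (Quiver.Path.length_comp w (I.map b))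
    omega
  obtain rfl := Quiver.Path.eq_nil_of_length_zero w hw
  refine ⟨rfl, (Category.id_comp b).symm, ?_⟩
  rw [eqToHom_refl, Category.comp_id]
  exact (Functor.Faithful.of_comp_eq h).map_injective hwu

theorem uniqueLastAtom_ofRetract (h : I ⋙ R = 𝟭 A) : (ofRetract h).UniqueLastAtom := by
  intro X Y Z Z' a b u v ha hb huv
  rcases le_total ((ofRetract h).len a) ((ofRetract h).len b) with hab | hba
  · exact ofRetract_exists_eq_of_comp_eq h ha hb huv hab
  · obtain ⟨rfl, rfl, rfl⟩ := ofRetract_exists_eq_of_comp_eq h hb ha huv.symm hba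
    exact ⟨rfl, by simp, by simp⟩

end LengthFunction

def CategoryTheory.IsoCat.toCatIso {C D : Type u} [Category.{v} C] [Category.{v} D]
    (e : IsoCat C D) : Cat.of C ≅ Cat.of D where
  hom := e.functor.toCatHom
  inv := e.inverse.toCatHom
  hom_inv_id := congrArg Functor.toCatHom e.unit_eq.symm
  inv_hom_id := congrArg Functor.toCatHom e.counit_eq

theorem retract_of_free_category_is_free
    {A : Type u} [Category.{u} A] (G : Type u) [Quiver.{u} G]
    (I : A ⥤ Paths G) (R : Paths G ⥤ A) (h : I ⋙ R = 𝟭 A) :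
    ∃ (H : Type u) (q : Quiver.{u} H),
      Nonempty (Cat.of A ≅ @Cat.of (Paths H) (@Paths.categoryPaths H q)) := by
  let ℓ := LengthFunction.ofRetract h
  have := ℓ.isIso_composite (LengthFunction.uniqueLastAtom_ofRetract h)
  exact ⟨ℓ.Atoms, _, ⟨ℓ.composite.asIsomorphism.toCatIso.symm⟩⟩
end
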